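/- arXiv:2203.12740 — 2 statements merged into one kernel-verified Lean document; each statement's English description precedes it below -/
import Mathlib

section
/- Suppose Assumptions TI and CONT hold, but instead of strict monotonicity assume only that μ₀₀ and μ₁₁ are nondecreasing on ℝ (weak monotonicity, allowing discrete outcomes). With the conventions inf ∅ := +∞ and F_{X|A}(+∞) := 1, the following upper bound holds for every y ∈ ℝ: F_{Y₁(1)|G=0,R=1}(y) ≤ F_{Y₀|G=0,R=1}(F_{Y₀|G=1,R=1}^{-1}(F_{Y₁|G=1,R=1}(y))). (Upper-bound half of Remark 2 for the counterfactual treated outcome of control respondents.) -/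
open MeasureTheory ProbabilityTheory

/-- Conditional CDF of `X` given the event `A`: `F_{X|A}(y) = P(X ≤ y | A)`. -/
noncomputable def cCDF {Ω : Type*} [MeasurableSpace Ω] (P : Measure Ω) (A : Set Ω)
    (X : Ω → ℝ) (y : ℝ) : ℝ :=
  ((P[|A]) {ω | X ω ≤ y}).toReal

/-- Generalized inverse `F⁻¹(q) = inf {y ∈ ℝ : F(y) ≥ q}`. -/
noncomputable def ginv (F : ℝ → ℝ) (q : ℝ) : ℝ :=
  sInf {y : ℝ | q ≤ F y}

/-- Conditional expectation of `X` given the event `A`: `E[X·1_A]/P(A)`. -/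
noncomputable def cExp {Ω : Type*} [MeasurableSpace Ω] (P : Measure Ω) (A : Set Ω)
    (X : Ω → ℝ) : ℝ :=
  (∫ ω in A, X ω ∂P) / (P A).toReal

/-- Conditional probability of `B` given `A`: `P(B|A) = P(B ∩ A)/P(A)`. -/
noncomputable def condProb {Ω : Type*} [MeasurableSpace Ω] (P : Measure Ω)
    (A B : Set Ω) : ℝ :=
  (P (B ∩ A)).toReal / (P A).toReal

/-- Generalized inverse valued in `EReal`, with the convention `inf ∅ = +∞`
(and `inf S = -∞` when `S` is nonempty but unbounded below). -/
noncomputable def ginvE (F : ℝ → ℝ) (q : ℝ) : EReal :=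
  sInf {z : EReal | ∃ x : ℝ, z = (x : EReal) ∧ q ≤ F x}

/-- Conditional CDF extended to `EReal` arguments, with the conventions
`F_{X|A}(+∞) = 1` and `F_{X|A}(-∞) = 0`. -/
noncomputable def cCDFE {Ω : Type*} [MeasurableSpace Ω] (P : Measure Ω) (A : Set Ω)
    (X : Ω → ℝ) (y : EReal) : ℝ :=
  if y = ⊤ then 1 else if y = ⊥ then 0 else cCDF P A X y.toReal

/-!
Let `ν₀`, `ν₁` be the laws of `U₁` on `{G = 0, R = 1}` and `{G = 1, R = 1}`; by time invariance
they are also the laws of `U₀` there. With the lower sets `S = {μ₁₁ ≤ y}` and `Tₓ = {μ₀₀ ≤ x}`,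
the left side is `ν₀ S`, the argument of the quantile is `ν₁ S`, and `F_{Y₀|G=1,R=1}(x) = ν₁ Tₓ`.
For lower sets `S`, `T`, `ν₁ S ≤ ν₁ T` forces `ν₀ S ≤ ν₀ T`: otherwise the atomless `ν₀` charges
`S \ T`, which then contains two points `a < b`, so `T ⊆ Iic a` and `Iic b ⊆ S`, contradicting
strict monotonicity of the CDF of `ν₁`. Hence `ν₀ S ≤ F_{Y₀|G=0,R=1}(x)` for every `x` in the set
whose infimum is the quantile, and right-continuity of the CDF, its limit `0` at `-∞` and the
convention `F(+∞) = 1` carry the bound to the infimum.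
-/

open Set

lemma nullSingletonClass_of_continuous_cdf {ν : Measure ℝ} [IsProbabilityMeasure ν]
    (h : Continuous (cdf ν)) : NullSingletonClass ν := by
  refine ⟨fun x => ?_⟩
  rw [← measure_cdf ν, StieltjesFunction.measure_singleton,
    h.continuousAt.continuousWithinAt.leftLim_eq, sub_self, ENNReal.ofReal_zero]

lemma measureReal_le_of_isLowerSet {ν₀ ν₁ : Measure ℝ} [IsFiniteMeasure ν₀]
    [NullSingletonClass ν₀] [IsProbabilityMeasure ν₁] (hν₁ : StrictMono (cdf ν₁))
    {S T : Set ℝ} (hS : IsLowerSet S) (hT : IsLowerSet T) (h : ν₁.real S ≤ ν₁.real T) :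
    ν₀.real S ≤ ν₀.real T := by
  by_contra! hlt
  have hST : (S \ T).Nontrivial := by
    rw [← not_subsingleton_iff]
    intro hsub
    have : ν₀.real S ≤ ν₀.real T := calc
      ν₀.real S ≤ ν₀.real (T ∪ S \ T) := measureReal_mono (by simp)
      _ ≤ ν₀.real T + ν₀.real (S \ T) := measureReal_union_le _ _
      _ = ν₀.real T := by simp [measureReal_def, hsub.measure_zero]
    linarith
  obtain ⟨a, ⟨-, haT⟩, b, ⟨hbS, -⟩, hab⟩ := hST.exists_lt
  have hTa : T ⊆ Iic a := fun x hx => le_of_not_ge fun hax => haT (hT hax hx)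
  have hbS : Iic b ⊆ S := fun x hx => hS hx hbS
  have : ν₁.real T < ν₁.real S := calc
    ν₁.real T ≤ cdf ν₁ a := (measureReal_mono hTa).trans_eq (cdf_eq_real ν₁ a).symm
    _ < cdf ν₁ b := hν₁ hab
    _ ≤ ν₁.real S := (cdf_eq_real ν₁ b).trans_le (measureReal_mono hbS)
  linarith

section

variable {Ω : Type*} [MeasurableSpace Ω] {P : Measure Ω} {A : Set Ω}

lemma cCDF_eq_cdf [IsProbabilityMeasure (P[|A])] {X : Ω → ℝ} (hX : Measurable X) :
    cCDF P A X = cdf ((P[|A]).map X) := by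
  have := Measure.isProbabilityMeasure_map (μ := P[|A]) hX.aemeasurable
  funext t
  rw [cdf_eq_real, measureReal_def, Measure.map_apply hX measurableSet_Iic]
  rfl

lemma cCDF_comp_eq_measureReal_map {U : Ω → ℝ} {f : ℝ → ℝ} (hU : Measurable U)
    (hf : Measurable f) (t : ℝ) :
    cCDF P A (fun ω => f (U ω)) t = ((P[|A]).map U).real {u | f u ≤ t} := by
  have hS : MeasurableSet {u | f u ≤ t} := hf measurableSet_Iic
  rw [measureReal_def, Measure.map_apply hU hS]
  rfl

lemma cCDF_congr {X X' : Ω → ℝ} (hA : MeasurableSet A) (h : ∀ ω ∈ A, X ω = X' ω) :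
    cCDF P A X = cCDF P A X' := by
  funext t
  have : A ∩ {ω | X ω ≤ t} = A ∩ {ω | X' ω ≤ t} := by
    ext ω
    simp +contextual [h ω]
  simp only [cCDF, cond_apply hA, this]

lemma le_cCDFE_ginvE [IsProbabilityMeasure (P[|A])] {X : Ω → ℝ} (hX : Measurable X)
    {F : ℝ → ℝ} {q c : ℝ} (hc : c ≤ 1) (h : ∀ x, q ≤ F x → c ≤ cCDF P A X x) :
    c ≤ cCDFE P A X (ginvE F q) := by
  set μ := (P[|A]).map X
  have hF : cCDF P A X = cdf μ := cCDF_eq_cdf hX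
  have hle : ∀ b : ℝ, ginvE F q < b → c ≤ cdf μ b := by
    intro b hb
    obtain ⟨_, ⟨x, rfl, hx⟩, hxb⟩ := sInf_lt_iff.mp hb
    exact (hF ▸ h x hx).trans ((cdf μ).mono (EReal.coe_lt_coe_iff.mp hxb).le)
  generalize ginvE F q = z at hle
  induction z using EReal.rec with
  | bot =>
    simpa [cCDFE] using ge_of_tendsto' (tendsto_cdf_atBot μ) fun b => hle b (EReal.bot_lt_coe b)
  | coe t =>
    simp only [cCDFE, EReal.coe_ne_top, EReal.coe_ne_bot, if_false, EReal.toReal_coe, hF]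
    exact ge_of_tendsto (((cdf μ).right_continuous t).mono Ioi_subset_Ici_self)
      (eventually_nhdsWithin_of_forall fun b hb => hle b (EReal.coe_lt_coe_iff.mpr hb))
  | top => simpa [cCDFE] using hc

end

/-- **Remark 2 (upper bound, counterfactual treated outcome of control respondents)**:
under Assumptions TI and CONT, with `μ₀₀` and `μ₁₁` only nondecreasing (weak monotonicity,
allowing discrete outcomes), for every `y ∈ ℝ`,
`F_{Y₁(1)|G=0,R=1}(y) ≤ F_{Y₀|G=0,R=1}(F_{Y₀|G=1,R=1}⁻¹(F_{Y₁|G=1,R=1}(y)))`,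
with the conventions `inf ∅ = +∞` and `F(+∞) = 1`. -/
theorem cic_remark2_upper_treated {Ω : Type*} [MeasurableSpace Ω]
    (P : Measure Ω) [IsProbabilityMeasure P]
    (U₀ U₁ : Ω → ℝ) (G R : Ω → Bool)
    (hU₀ : Measurable U₀) (hU₁ : Measurable U₁)
    (hG : Measurable G) (hR : Measurable R)
    (μ00 μ10 μ11 : ℝ → ℝ)
    -- observed outcomes
    (Y0 Y1 : Ω → ℝ)
    (hY0 : ∀ ω, Y0 ω = μ00 (U₀ ω))
    (hY1 : ∀ ω, Y1 ω = if G ω = true then μ11 (U₁ ω) else μ10 (U₁ ω))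
    -- Assumption TI (time invariance)
    (hTI : ∀ g r : Bool, 0 < P {ω | G ω = g ∧ R ω = r} →
      (P[|{ω | G ω = g ∧ R ω = r}]).map U₀ = (P[|{ω | G ω = g ∧ R ω = r}]).map U₁)
    -- Assumption CONT
    (hCONT : ∀ g : Bool, 0 < P {ω | G ω = g ∧ R ω = true} ∧
      Continuous (cCDF P {ω | G ω = g ∧ R ω = true} U₁) ∧
      StrictMono (cCDF P {ω | G ω = g ∧ R ω = true} U₁))
    -- weak monotonicity of μ₀₀ and μ₁₁
    (hμ00 : Monotone μ00) (hμ11 : Monotone μ11)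
    (y : ℝ) :
    cCDF P {ω | G ω = false ∧ R ω = true} (fun ω => μ11 (U₁ ω)) y
      ≤ cCDFE P {ω | G ω = false ∧ R ω = true} Y0
          (ginvE (cCDF P {ω | G ω = true ∧ R ω = true} Y0)
            (cCDF P {ω | G ω = true ∧ R ω = true} Y1 y)) := by
  obtain ⟨hP₁, -, hstrict₁⟩ := hCONT true
  obtain ⟨hP₀, hcont₀, -⟩ := hCONT false
  set A₀ := {ω | G ω = false ∧ R ω = true}
  set A₁ := {ω | G ω = true ∧ R ω = true}
  have hA₁ : MeasurableSet A₁ :=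
    (hG (measurableSet_singleton true)).inter (hR (measurableSet_singleton true))
  have := cond_isProbabilityMeasure (μ := P) hP₀.ne'
  have := cond_isProbabilityMeasure (μ := P) hP₁.ne'
  have := Measure.isProbabilityMeasure_map (μ := P[|A₀]) hU₁.aemeasurable
  have := Measure.isProbabilityMeasure_map (μ := P[|A₁]) hU₁.aemeasurable
  have : NullSingletonClass ((P[|A₀]).map U₁) :=
    nullSingletonClass_of_continuous_cdf (cCDF_eq_cdf (P := P) (A := A₀) hU₁ ▸ hcont₀)
  obtain rfl : Y0 = fun ω => μ00 (U₀ ω) := funext hY0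
  have hY1_eq : cCDF P A₁ Y1 = cCDF P A₁ (fun ω => μ11 (U₁ ω)) :=
    cCDF_congr hA₁ fun ω hω => by rw [hY1, if_pos hω.1]
  refine le_cCDFE_ginvE (X := fun ω => μ00 (U₀ ω)) (hμ00.measurable.comp hU₀) measureReal_le_one
    fun x hx => ?_
  rw [hY1_eq, cCDF_comp_eq_measureReal_map hU₁ hμ11.measurable,
    cCDF_comp_eq_measureReal_map hU₀ hμ00.measurable, hTI true true hP₁] at hx
  rw [cCDF_comp_eq_measureReal_map hU₁ hμ11.measurable,
    cCDF_comp_eq_measureReal_map hU₀ hμ00.measurable, hTI false true hP₀]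
  exact measureReal_le_of_isLowerSet (cCDF_eq_cdf (P := P) (A := A₁) hU₁ ▸ hstrict₁)
    ((isLowerSet_Iic y).preimage hμ11) ((isLowerSet_Iic x).preimage hμ00) hx
end

section
/- Suppose Assumptions TI, CONT, M0 and M1 hold, P(G=0, R=0) > 0, and μ₁₀(U₀), μ₁₀(U₁), μ₁₁(U₀), μ₁₁(U₁) are all P-integrable. Then the average treatment effect on the untreated (control) attritors is identified: E[Y₁(1) − Y₁(0) | G=0, R=0] = E[F_{Y₁|G=1,R=1}^{-1}(F_{Y₀|G=1,R=1}(Y₀)) | G=0, R=0] − E[F_{Y₁|G=0,R=1}^{-1}(F_{Y₀|G=0,R=1}(Y₀)) | G=0, R=0]. (ATU-A component of Proposition 3.) -/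
open MeasureTheory ProbabilityTheory

/-- Evaluation of the generalized inverse of the pushforward CDF at a CDF value. -/
lemma ginv_eval {Ω : Type*} [MeasurableSpace Ω] (ν : Measure Ω) [IsFiniteMeasure ν]
    (U : Ω → ℝ) (g : ℝ → ℝ) (hgc : Continuous g) (hg : StrictMono g)
    (hF : StrictMono (fun u => (ν {ω | U ω ≤ u}).toReal)) (u : ℝ) :
    ginv (fun y => (ν {ω | g (U ω) ≤ y}).toReal) ((ν {ω | U ω ≤ u}).toReal) = g u := by
  set Fu : ℝ → ℝ := fun u => (ν {ω | U ω ≤ u}).toReal with hFu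
  set F : ℝ → ℝ := fun y => (ν {ω | g (U ω) ≤ y}).toReal with hFdef
  have hmem : g u ∈ {y : ℝ | Fu u ≤ F y} := by
    have : {ω | g (U ω) ≤ g u} = {ω | U ω ≤ u} := by
      ext ω; simp [hg.le_iff_le]
    simp only [Set.mem_setOf_eq, hFdef, this, le_refl, Fu]
  have hlb : ∀ y ∈ {y : ℝ | Fu u ≤ F y}, g u ≤ y := by
    intro y hy
    by_contra hlt
    push_neg at hlt
    have hFy : F y < Fu u := by
      rcases Set.eq_empty_or_nonempty {t : ℝ | g t ≤ y} with hS | hS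
      · have h0 : {ω | g (U ω) ≤ y} = ∅ := by
          ext ω; simp only [Set.mem_setOf_eq, Set.mem_empty_iff_false, iff_false]
          exact Set.eq_empty_iff_forall_notMem.mp hS (U ω)
        have : F y = 0 := by simp [hFdef, h0]
        rw [this]
        have h1 : Fu (u - 1) < Fu u := hF (by linarith)
        have h2 : (0:ℝ) ≤ Fu (u - 1) := ENNReal.toReal_nonneg
        linarith
      · have hbdd : BddAbove {t : ℝ | g t ≤ y} := by
          refine ⟨u, fun t ht => ?_⟩
          have : g t < g u := lt_of_le_of_lt ht hlt
          exact le_of_lt (hg.lt_iff_lt.mp this)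
        have hcl : IsClosed {t : ℝ | g t ≤ y} := isClosed_Iic.preimage hgc
        have hc : sSup {t : ℝ | g t ≤ y} ∈ {t : ℝ | g t ≤ y} := hcl.csSup_mem hS hbdd
        set c := sSup {t : ℝ | g t ≤ y}
        have hcu : c < u := hg.lt_iff_lt.mp (lt_of_le_of_lt hc hlt)
        have hsub : {ω | g (U ω) ≤ y} ⊆ {ω | U ω ≤ c} := fun ω hω =>
          le_csSup hbdd hω
        have h1 : F y ≤ Fu c :=
          ENNReal.toReal_mono (measure_ne_top ν _) (measure_mono hsub)
        exact lt_of_le_of_lt h1 (hF hcu)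
    exact absurd hy (by simp only [Set.mem_setOf_eq, not_le]; exact hFy)
  exact IsLeast.csInf_eq ⟨hmem, hlb⟩

/-- Pointwise identification: the CiC transform returns `g (U₀ ω)`. -/
lemma key_pointwise {Ω : Type*} [MeasurableSpace Ω] (P : Measure Ω) [IsProbabilityMeasure P]
    (U₀ U₁ : Ω → ℝ) (hU₀ : Measurable U₀) (hU₁ : Measurable U₁)
    (A : Set Ω) (hA : MeasurableSet A)
    (g : ℝ → ℝ) (hgc : Continuous g) (hg : StrictMono g)
    (μ00 : ℝ → ℝ) (hμ00 : StrictMono μ00)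
    (Y0 Y1 : Ω → ℝ) (hY0 : ∀ ω, Y0 ω = μ00 (U₀ ω))
    (hY1A : ∀ ω ∈ A, Y1 ω = g (U₁ ω))
    (hTI : (P[|A]).map U₀ = (P[|A]).map U₁)
    (hSM : StrictMono (cCDF P A U₁))
    (ω : Ω) :
    ginv (cCDF P A Y1) (cCDF P A Y0 (Y0 ω)) = g (U₀ ω) := by
  have h0 : cCDF P A Y0 (Y0 ω) = ((P[|A]) {ω' | U₁ ω' ≤ U₀ ω}).toReal := by
    have hset : {ω' | Y0 ω' ≤ Y0 ω} = U₀ ⁻¹' Set.Iic (U₀ ω) := by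
      ext ω'; simp [hY0, hμ00.le_iff_le, Set.mem_Iic]
    have h1 : cCDF P A Y0 (Y0 ω) = (((P[|A]).map U₀) (Set.Iic (U₀ ω))).toReal := by
      rw [Measure.map_apply hU₀ measurableSet_Iic]; unfold cCDF; rw [hset]
    rw [h1, hTI, Measure.map_apply hU₁ measurableSet_Iic]
    rfl
  have h1 : cCDF P A Y1 = fun y => ((P[|A]) {ω' | g (U₁ ω') ≤ y}).toReal := by
    funext y
    unfold cCDF
    rw [cond_apply hA, cond_apply hA]
    have hset : A ∩ {ω' | Y1 ω' ≤ y} = A ∩ {ω' | g (U₁ ω') ≤ y} := by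
      ext ω'
      simp only [Set.mem_inter_iff, Set.mem_setOf_eq]
      exact and_congr_right fun hω' => by rw [hY1A ω' hω']
    rw [hset]
  rw [h0, h1]
  exact ginv_eval (P[|A]) U₁ g hgc hg hSM (U₀ ω)

/-- `cExp` equals the integral against the conditional measure. -/
lemma cExp_eq_integral_cond {Ω : Type*} [MeasurableSpace Ω] (P : Measure Ω) (A : Set Ω)
    (f : Ω → ℝ) : cExp P A f = ∫ ω, f ω ∂(P[|A]) := by
  unfold cExp
  rw [ProbabilityTheory.cond, integral_smul_measure, ENNReal.toReal_inv, smul_eq_mul,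
    div_eq_inv_mul]

/-- **ATU-A component of Proposition 3**: under Assumptions TI, CONT, M0 and M1, with
`P(G=0, R=0) > 0` and integrability of `μ₁₀(U₀)`, `μ₁₀(U₁)`, `μ₁₁(U₀)`, `μ₁₁(U₁)`, the
average treatment effect on the untreated (control) attritors is identified:
`E[Y₁(1) − Y₁(0) | G=0, R=0]
  = E[F_{Y₁|G=1,R=1}⁻¹(F_{Y₀|G=1,R=1}(Y₀)) | G=0,R=0]
    − E[F_{Y₁|G=0,R=1}⁻¹(F_{Y₀|G=0,R=1}(Y₀)) | G=0,R=0]`. -/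
theorem cic_prop3_ATUA {Ω : Type*} [MeasurableSpace Ω]
    (P : Measure Ω) [IsProbabilityMeasure P]
    (U₀ U₁ : Ω → ℝ) (G R : Ω → Bool)
    (hU₀ : Measurable U₀) (hU₁ : Measurable U₁)
    (hG : Measurable G) (hR : Measurable R)
    (μ00 μ10 μ11 : ℝ → ℝ)
    -- observed outcomes
    (Y0 Y1 : Ω → ℝ)
    (hY0 : ∀ ω, Y0 ω = μ00 (U₀ ω))
    (hY1 : ∀ ω, Y1 ω = if G ω = true then μ11 (U₁ ω) else μ10 (U₁ ω))
    -- Assumption TI (time invariance)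
    (hTI : ∀ g r : Bool, 0 < P {ω | G ω = g ∧ R ω = r} →
      (P[|{ω | G ω = g ∧ R ω = r}]).map U₀ = (P[|{ω | G ω = g ∧ R ω = r}]).map U₁)
    -- Assumption CONT
    (hCONT : ∀ g : Bool, 0 < P {ω | G ω = g ∧ R ω = true} ∧
      Continuous (cCDF P {ω | G ω = g ∧ R ω = true} U₁) ∧
      StrictMono (cCDF P {ω | G ω = g ∧ R ω = true} U₁))
    -- Assumption M0
    (hμ00c : Continuous μ00) (hμ00 : StrictMono μ00)
    (hμ10c : Continuous μ10) (hμ10 : StrictMono μ10)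
    -- Assumption M1
    (hμ11c : Continuous μ11) (hμ11 : StrictMono μ11)
    -- positive probability of control attritors
    (hpos : 0 < P {ω | G ω = false ∧ R ω = false})
    -- integrability
    (hI1 : Integrable (fun ω => μ10 (U₀ ω)) P)
    (hI2 : Integrable (fun ω => μ10 (U₁ ω)) P)
    (hI3 : Integrable (fun ω => μ11 (U₀ ω)) P)
    (hI4 : Integrable (fun ω => μ11 (U₁ ω)) P) :
    cExp P {ω | G ω = false ∧ R ω = false} (fun ω => μ11 (U₁ ω) - μ10 (U₁ ω))
      = cExp P {ω | G ω = false ∧ R ω = false}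
          (fun ω => ginv (cCDF P {ω | G ω = true ∧ R ω = true} Y1)
            (cCDF P {ω | G ω = true ∧ R ω = true} Y0 (Y0 ω)))
        - cExp P {ω | G ω = false ∧ R ω = false}
            (fun ω => ginv (cCDF P {ω | G ω = false ∧ R ω = true} Y1)
              (cCDF P {ω | G ω = false ∧ R ω = true} Y0 (Y0 ω))) := by
  have hAmeas : ∀ g r : Bool, MeasurableSet {ω | G ω = g ∧ R ω = r} := by
    intro g r
    have : {ω | G ω = g ∧ R ω = r} = G ⁻¹' {g} ∩ R ⁻¹' {r} := by ext ω; simp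
    rw [this]
    exact (hG (measurableSet_singleton g)).inter (hR (measurableSet_singleton r))
  set B := {ω | G ω = false ∧ R ω = false} with hBdef
  -- pointwise identification of the two transforms
  have hpt1 : ∀ ω, ginv (cCDF P {ω | G ω = true ∧ R ω = true} Y1)
      (cCDF P {ω | G ω = true ∧ R ω = true} Y0 (Y0 ω)) = μ11 (U₀ ω) := by
    intro ω
    exact key_pointwise P U₀ U₁ hU₀ hU₁ _ (hAmeas true true) μ11 hμ11c hμ11 μ00 hμ00
      Y0 Y1 hY0 (fun ω' hω' => by simp [hY1, hω'.1]) (hTI true true (hCONT true).1)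
      (hCONT true).2.2 ω
  have hpt0 : ∀ ω, ginv (cCDF P {ω | G ω = false ∧ R ω = true} Y1)
      (cCDF P {ω | G ω = false ∧ R ω = true} Y0 (Y0 ω)) = μ10 (U₀ ω) := by
    intro ω
    exact key_pointwise P U₀ U₁ hU₀ hU₁ _ (hAmeas false true) μ10 hμ10c hμ10 μ00 hμ00
      Y0 Y1 hY0 (fun ω' hω' => by simp [hY1, hω'.1]) (hTI false true (hCONT false).1)
      (hCONT false).2.2 ω
  rw [show (fun ω => ginv (cCDF P {ω | G ω = true ∧ R ω = true} Y1)
      (cCDF P {ω | G ω = true ∧ R ω = true} Y0 (Y0 ω))) = fun ω => μ11 (U₀ ω) from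
      funext hpt1,
    show (fun ω => ginv (cCDF P {ω | G ω = false ∧ R ω = true} Y1)
      (cCDF P {ω | G ω = false ∧ R ω = true} Y0 (Y0 ω))) = fun ω => μ10 (U₀ ω) from
      funext hpt0]
  -- transport from U₀ to U₁ on the control-attritor event
  have hTIB := hTI false false hpos
  have hswap : ∀ g : ℝ → ℝ, Continuous g →
      cExp P B (fun ω => g (U₀ ω)) = cExp P B (fun ω => g (U₁ ω)) := by
    intro g hgc
    rw [cExp_eq_integral_cond, cExp_eq_integral_cond,
      ← integral_map hU₀.aemeasurable hgc.aestronglyMeasurable, hTIB,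
      integral_map hU₁.aemeasurable hgc.aestronglyMeasurable]
  rw [hswap μ11 hμ11c, hswap μ10 hμ10c]
  unfold cExp
  rw [integral_sub hI4.integrableOn hI2.integrableOn, sub_div]
end
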